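/- Best sublinear bound on the splitting gap (Remark 1, second bound): Let d ≥ 1, let f, g : ℝ^d → ℝ be convex, and let h : ℝ^d → ℝ be convex and differentiable with L_h-Lipschitz gradient, L_h > 0. Set λ = 1/2 and α = 3/(2L_h). Then along any TOS trajectory with stepsize α and relaxation λ that admits a TOS fixed point (z*, x*, y*, p_g*, p_f*), one has for every k ≥ 1: min over 0 ≤ i < k of ‖x_B^i − x_A^i‖² ≤ 8 ‖z⁰ − z*‖² / (3 k). -/

import Mathlib

open scoped RealInnerProductSpace

/-!
Along the three-operator (Davis–Yin) iteration, the differences to the fixed point split as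
`z - zs = (xB - xs) + a` and `xA - xB = -(a + b + c)`, where `a`, `b` are `α` times differences of
subgradients of `g`, `f` (monotone) and `c` is `α` times a difference of gradients of `h`, which is
`1/(αL)`-cocoercive by Baillon–Haddad. A sum-of-squares identity turns this into
`⟪z - zs, xA - xB⟫ ≤ -(1 - αL/4) ‖xA - xB‖²`, so each relaxed step decreases `‖z - zs‖²` by
`λ (2 - αL/2 - λ) ‖xA - xB‖²`, which is `3/8 ‖xA - xB‖²` for `λ = 1/2`, `αL = 3/2`.
Telescoping, the smallest of the first `k` gaps is at most their average, `8 ‖z⁰ - zs‖² / (3k)`.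
-/

section Gradient

variable {E : Type*} [NormedAddCommGroup E] [InnerProductSpace ℝ E] [CompleteSpace E]

theorem HasGradientAt.hasDerivAt_comp_add_smul {φ : E → ℝ} {g x v : E} {t : ℝ}
    (h : HasGradientAt φ g (x + t • v)) :
    HasDerivAt (fun s : ℝ => φ (x + s • v)) ⟪g, v⟫ t := by
  have hline : HasDerivAt (fun s : ℝ => x + s • v) v t := by
    simpa using ((hasDerivAt_id t).smul_const v).const_add x
  have := h.hasFDerivAt.comp_hasDerivAt t hline
  simp only [InnerProductSpace.toDual_apply_apply] at this
  exact this

theorem ConvexOn.add_inner_le_of_hasGradientAt {φ : E → ℝ} {g x : E}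
    (hφ : ConvexOn ℝ Set.univ φ) (hg : HasGradientAt φ g x) (y : E) :
    φ x + ⟪g, y - x⟫ ≤ φ y := by
  have hline : ConvexOn ℝ Set.univ (fun t : ℝ => φ (x + t • (y - x))) := by
    have hcomp : (fun t : ℝ => φ (x + t • (y - x))) = φ ∘ AffineMap.lineMap x y := by
      funext t
      simp only [Function.comp_apply, AffineMap.lineMap_apply, vsub_eq_sub, vadd_eq_add]
      congr 1
      module
    simpa [hcomp] using hφ.comp_affineMap (AffineMap.lineMap x y)
  have hderiv := HasGradientAt.hasDerivAt_comp_add_smul (x := x) (v := y - x) (t := 0)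
    (by rwa [zero_smul, add_zero])
  have := hline.le_slope_of_hasDerivAt (Set.mem_univ 0) (Set.mem_univ 1) zero_lt_one hderiv
  simp only [slope_def_field, zero_smul, add_zero, one_smul, add_sub_cancel, sub_zero,
    div_one] at this
  linarith

theorem le_add_inner_add_of_lipschitz_gradient {φ : E → ℝ} {G : E → E} {L : ℝ}
    (hd : ∀ x, HasGradientAt φ (G x) x) (hlip : ∀ x y, ‖G x - G y‖ ≤ L * ‖x - y‖) (x y : E) :
    φ y ≤ φ x + ⟪G x, y - x⟫ + L / 2 * ‖y - x‖ ^ 2 := by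
  set v := y - x
  set χ : ℝ → ℝ := fun t => φ (x + t • v) - t * ⟪G x, v⟫ - L / 2 * t ^ 2 * ‖v‖ ^ 2
  have hχ : ∀ t, HasDerivAt χ (⟪G (x + t • v) - G x, v⟫ - L * t * ‖v‖ ^ 2) t := by
    intro t
    have hsq := ((hasDerivAt_pow 2 t).const_mul (L / 2)).mul_const (‖v‖ ^ 2)
    refine ((((hd _).hasDerivAt_comp_add_smul).sub
      ((hasDerivAt_id t).mul_const ⟪G x, v⟫)).sub hsq).congr_deriv ?_
    simp only [inner_sub_left, Nat.cast_ofNat]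
    ring
  have hanti : AntitoneOn χ (Set.Icc 0 1) := by
    refine antitoneOn_of_hasDerivWithinAt_nonpos (convex_Icc 0 1)
      (fun t _ => (hχ t).continuousAt.continuousWithinAt) (fun t _ => (hχ t).hasDerivWithinAt) ?_
    intro t ht
    rw [interior_Icc] at ht
    have hGt : ‖G (x + t • v) - G x‖ ≤ L * (t * ‖v‖) := by
      simpa [norm_smul, abs_of_pos ht.1] using hlip (x + t • v) x
    calc ⟪G (x + t • v) - G x, v⟫ - L * t * ‖v‖ ^ 2
        ≤ ‖G (x + t • v) - G x‖ * ‖v‖ - L * t * ‖v‖ ^ 2 := by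
          gcongr; exact real_inner_le_norm _ _
      _ ≤ 0 := by nlinarith [norm_nonneg v]
  have h01 := hanti (Set.left_mem_Icc.mpr zero_le_one) (Set.right_mem_Icc.mpr zero_le_one)
    zero_le_one
  simp only [χ, v, zero_smul, add_zero, one_smul, add_sub_cancel] at h01
  linarith

theorem ConvexOn.add_inner_add_norm_sq_le_of_lipschitz_gradient {φ : E → ℝ} {G : E → E} {L : ℝ}
    (hL : 0 < L) (hφ : ConvexOn ℝ Set.univ φ) (hd : ∀ x, HasGradientAt φ (G x) x)
    (hlip : ∀ x y, ‖G x - G y‖ ≤ L * ‖x - y‖) (x y : E) :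
    φ x + ⟪G x, y - x⟫ + 1 / (2 * L) * ‖G y - G x‖ ^ 2 ≤ φ y := by
  -- bound `φ w` from both sides at the gradient step `w` from `y`
  set w := y - (1 / L) • (G y - G x)
  have hlower := hφ.add_inner_le_of_hasGradientAt (hd x) w
  have hupper := le_add_inner_add_of_lipschitz_gradient hd hlip y w
  have hwy : w - y = -((1 / L) • (G y - G x)) := by simp only [w]; abel
  have hwx : w - x = (y - x) - (1 / L) • (G y - G x) := by simp only [w]; abel
  rw [hwy, norm_neg, norm_smul, inner_neg_right, real_inner_smul_right] at hupper
  rw [hwx, inner_sub_right, real_inner_smul_right] at hlower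
  have hgap : 1 / L * ⟪G y, G y - G x⟫ - 1 / L * ⟪G x, G y - G x⟫
      = 1 / L * ‖G y - G x‖ ^ 2 := by
    rw [← mul_sub, ← inner_sub_left, real_inner_self_eq_norm_sq]
  have hcoef : L / 2 * (‖1 / L‖ * ‖G y - G x‖) ^ 2 = 1 / (2 * L) * ‖G y - G x‖ ^ 2 := by
    rw [Real.norm_of_nonneg (by positivity)]
    field_simp
  have hsplit : 1 / L * ‖G y - G x‖ ^ 2 = 2 * (1 / (2 * L) * ‖G y - G x‖ ^ 2) := by
    field_simp
  linarith

theorem ConvexOn.cocoercive_of_lipschitz_gradient {φ : E → ℝ} {G : E → E} {L : ℝ}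
    (hL : 0 < L) (hφ : ConvexOn ℝ Set.univ φ) (hd : ∀ x, HasGradientAt φ (G x) x)
    (hlip : ∀ x y, ‖G x - G y‖ ≤ L * ‖x - y‖) (x y : E) :
    1 / L * ‖G x - G y‖ ^ 2 ≤ ⟪G x - G y, x - y⟫ := by
  have hxy := hφ.add_inner_add_norm_sq_le_of_lipschitz_gradient hL hd hlip x y
  have hyx := hφ.add_inner_add_norm_sq_le_of_lipschitz_gradient hL hd hlip y x
  rw [norm_sub_rev] at hxy
  have hinner : ⟪G x - G y, x - y⟫ = -⟪G x, y - x⟫ - ⟪G y, x - y⟫ := by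
    rw [← neg_sub y x]
    simp only [inner_sub_left, inner_neg_right]
    ring
  have hsplit : 1 / L * ‖G x - G y‖ ^ 2 = 2 * (1 / (2 * L) * ‖G x - G y‖ ^ 2) := by
    field_simp
  linarith

end Gradient

section ThreeOperatorSplitting

variable {E : Type*} [NormedAddCommGroup E] [InnerProductSpace ℝ E]

theorem inner_sub_nonneg_of_subgradient {φ : E → ℝ} {p q x y : E}
    (hp : ∀ w, φ x + ⟪p, w - x⟫ ≤ φ w) (hq : ∀ w, φ y + ⟪q, w - y⟫ ≤ φ w) :
    0 ≤ ⟪p - q, x - y⟫ := by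
  have hpy := hp y
  have hqx := hq x
  have hinner : ⟪p - q, x - y⟫ = -⟪p, y - x⟫ - ⟪q, x - y⟫ := by
    rw [← neg_sub y x]
    simp only [inner_sub_left, inner_neg_right]
    ring
  linarith

theorem inner_le_of_three_operator_splitting {a b c x z u : E} {κ : ℝ} (hκ : 0 < κ)
    (hx : x = z - a) (hu : u = -(a + b + c))
    (ha : 0 ≤ ⟪a, x⟫) (hb : 0 ≤ ⟪b, x + u⟫) (hc : ‖c‖ ^ 2 ≤ κ * ⟪c, x⟫) :
    ⟪z, u⟫ ≤ -(1 - κ / 4) * ‖u‖ ^ 2 := by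
  -- `4κ (-⟪z, u⟫ - (1 - κ/4) ‖u‖²) = 4κ ⟪a, x⟫ + 4κ ⟪b, x + u⟫ + 4 (κ ⟪c, x⟫ - ‖c‖²) + ‖2c + κu‖²`
  have young : 0 ≤ ‖(2 : ℝ) • c + κ • u‖ ^ 2 := by positivity
  subst hx hu
  simp only [← real_inner_self_eq_norm_sq] at young hc ⊢
  simp only [inner_add_left, inner_add_right, inner_sub_right, inner_neg_left, inner_neg_right,
    real_inner_smul_left, real_inner_smul_right] at young hc ha hb ⊢
  nlinarith [mul_nonneg hκ.le ha, mul_nonneg hκ.le hb, real_inner_comm a b, real_inner_comm a c,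
    real_inner_comm b c, real_inner_comm a z, real_inner_comm b z, real_inner_comm c z]

theorem norm_add_smul_sq_le_of_inner_le {z u : E} {γ lam : ℝ} (hlam : 0 ≤ lam)
    (h : ⟪z, u⟫ ≤ -γ * ‖u‖ ^ 2) :
    ‖z + lam • u‖ ^ 2 ≤ ‖z‖ ^ 2 - lam * (2 * γ - lam) * ‖u‖ ^ 2 := by
  rw [norm_add_sq_real, real_inner_smul_right, norm_smul, Real.norm_of_nonneg hlam]
  nlinarith [mul_le_mul_of_nonneg_left h hlam]

theorem tos_step_norm_sub_sq_le [CompleteSpace E] {f g h : E → ℝ} {G : E → E} {L α lam : ℝ}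
    (hL : 0 < L) (hα : 0 < α) (hlam : 0 ≤ lam) (hh : ConvexOn ℝ Set.univ h)
    (hd : ∀ x, HasGradientAt h (G x) x) (hlip : ∀ x y, ‖G x - G y‖ ≤ L * ‖x - y‖)
    {z xB y xA pg pf zs xs ys pgs pfs : E}
    (hsubg : ∀ w, g xB + ⟪pg, w - xB⟫ ≤ g w) (hsubf : ∀ w, f xA + ⟪pf, w - xA⟫ ≤ f w)
    (hxB : xB = z - α • pg) (hy : y = (2 : ℝ) • xB - z - α • G xB) (hxA : xA = y - α • pf)
    (hsubgs : ∀ w, g xs + ⟪pgs, w - xs⟫ ≤ g w) (hsubfs : ∀ w, f xs + ⟪pfs, w - xs⟫ ≤ f w)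
    (hxs : xs = zs - α • pgs) (hys : ys = (2 : ℝ) • xs - zs - α • G xs)
    (hxAs : xs = ys - α • pfs) :
    ‖z + lam • (xA - xB) - zs‖ ^ 2 ≤
      ‖z - zs‖ ^ 2 - lam * (2 - α * L / 2 - lam) * ‖xA - xB‖ ^ 2 := by
  have hx : xB - xs = (z - zs) - α • (pg - pgs) := by
    rw [hxB, hxs]; module
  have hu : xA - xB = -(α • (pg - pgs) + α • (pf - pfs) + α • (G xB - G xs)) := by
    rw [hxA, hy]
    linear_combination (norm := module) hxB - hxAs - hys - hxs
  have hg : 0 ≤ ⟪α • (pg - pgs), xB - xs⟫ := by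
    rw [real_inner_smul_left]
    exact mul_nonneg hα.le (inner_sub_nonneg_of_subgradient hsubg hsubgs)
  have hf : 0 ≤ ⟪α • (pf - pfs), xB - xs + (xA - xB)⟫ := by
    rw [sub_add_sub_cancel', real_inner_smul_left]
    exact mul_nonneg hα.le (inner_sub_nonneg_of_subgradient hsubf hsubfs)
  have hG : ‖α • (G xB - G xs)‖ ^ 2 ≤ α * L * ⟪α • (G xB - G xs), xB - xs⟫ := by
    have hcoco := hh.cocoercive_of_lipschitz_gradient hL hd hlip xB xs
    rw [norm_smul, real_inner_smul_left, Real.norm_of_nonneg hα.le]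
    calc (α * ‖G xB - G xs‖) ^ 2 = α ^ 2 * L * (1 / L * ‖G xB - G xs‖ ^ 2) := by
          field_simp
      _ ≤ α ^ 2 * L * ⟪G xB - G xs, xB - xs⟫ := by gcongr
      _ = α * L * (α * ⟪G xB - G xs, xB - xs⟫) := by ring
  have hinner := inner_le_of_three_operator_splitting (by positivity) hx hu hg hf hG
  rw [show z + lam • (xA - xB) - zs = z - zs + lam • (xA - xB) by abel]
  convert norm_add_smul_sq_le_of_inner_le hlam hinner using 3
  ring

end ThreeOperatorSplitting

theorem exists_lt_le_div_of_add_mul_le {a b : ℕ → ℝ} {c : ℝ} (hc : 0 < c)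
    (hdec : ∀ n, a (n + 1) + c * b n ≤ a n) (ha : ∀ n, 0 ≤ a n) {k : ℕ} (hk : 0 < k) :
    ∃ i < k, b i ≤ a 0 / (c * k) := by
  have htel : c * ∑ i ∈ Finset.range k, b i ≤ a 0 - a k := by
    rw [← Finset.sum_range_sub', Finset.mul_sum]
    exact Finset.sum_le_sum fun i _ => by linarith [hdec i]
  have hsum : ∑ i ∈ Finset.range k, b i ≤ ∑ _i ∈ Finset.range k, a 0 / (c * k) := by
    have hk' : (0 : ℝ) < k := Nat.cast_pos.mpr hk
    rw [Finset.sum_const, Finset.card_range, nsmul_eq_mul,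
      show (k : ℝ) * (a 0 / (c * k)) = a 0 / c by field_simp, le_div_iff₀ hc]
    linarith [ha k]
  obtain ⟨i, hi, hbi⟩ :=
    Finset.exists_le_of_sum_le (Finset.nonempty_range_iff.mpr hk.ne') hsum
  exact ⟨i, Finset.mem_range.mp hi, hbi⟩

theorem tos_best_sublinear_gap_bound_general
    {d : ℕ}
    (f g h : EuclideanSpace ℝ (Fin d) → ℝ)
    (hgrad : EuclideanSpace ℝ (Fin d) → EuclideanSpace ℝ (Fin d))
    (L_h : ℝ) (hLh : 0 < L_h)
    (hh : ConvexOn ℝ Set.univ h)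
    (hdiff : ∀ x, HasGradientAt h (hgrad x) x)
    (hlip : ∀ x y, ‖hgrad x - hgrad y‖ ≤ L_h * ‖x - y‖)
    (α lam : ℝ) (hlam : lam = 1 / 2) (hα : α = 3 / (2 * L_h))
    -- TOS trajectory
    (z xB y xA pg pf : ℕ → EuclideanSpace ℝ (Fin d))
    (hsubg : ∀ k w, g (xB k) + ⟪pg k, w - xB k⟫ ≤ g w)
    (hsubf : ∀ k w, f (xA k) + ⟪pf k, w - xA k⟫ ≤ f w)
    (hxB : ∀ k, xB k = z k - α • pg k)
    (hy : ∀ k, y k = (2 : ℝ) • xB k - z k - α • hgrad (xB k))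
    (hxA : ∀ k, xA k = y k - α • pf k)
    (hz : ∀ k, z (k + 1) = z k + lam • (xA k - xB k))
    -- TOS fixed point
    (zs xs ys pgs pfs : EuclideanSpace ℝ (Fin d))
    (hsubgs : ∀ w, g xs + ⟪pgs, w - xs⟫ ≤ g w)
    (hsubfs : ∀ w, f xs + ⟪pfs, w - xs⟫ ≤ f w)
    (hxs : xs = zs - α • pgs)
    (hys : ys = (2 : ℝ) • xs - zs - α • hgrad xs)
    (hxAs : xs = ys - α • pfs)
    (k : ℕ) (hk : 1 ≤ k) :
    ∃ i < k, ‖xB i - xA i‖ ^ 2 ≤ 8 * ‖z 0 - zs‖ ^ 2 / (3 * k) := by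
  have hα0 : 0 < α := by rw [hα]; positivity
  have hrate : lam * (2 - α * L_h / 2 - lam) = 3 / 8 := by
    rw [hlam, hα]; field_simp; norm_num
  have hdec : ∀ n, ‖z (n + 1) - zs‖ ^ 2 + 3 / 8 * ‖xB n - xA n‖ ^ 2 ≤ ‖z n - zs‖ ^ 2 := by
    intro n
    have hstep := tos_step_norm_sub_sq_le (lam := lam) hLh hα0 (by rw [hlam]; norm_num) hh hdiff
      hlip (hsubg n) (hsubf n) (hxB n) (hy n) (hxA n) hsubgs hsubfs hxs hys hxAs
    rw [hrate, ← hz n, norm_sub_rev (xA n)] at hstep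
    linarith
  obtain ⟨i, hi, hbound⟩ :=
    exists_lt_le_div_of_add_mul_le (a := fun n => ‖z n - zs‖ ^ 2)
      (b := fun n => ‖xB n - xA n‖ ^ 2) (by norm_num) hdec (fun _ => by positivity) hk
  refine ⟨i, hi, hbound.trans_eq ?_⟩
  field_simp

/-- **Remark 1, second bound** (best sublinear bound on the splitting gap). With `λ = 1/2`
and `α = 3/(2L_h)`, any TOS trajectory admitting a fixed point satisfies, for every `k ≥ 1`,
`min_{0 ≤ i < k} ‖x_B^i − x_A^i‖² ≤ 8 ‖z⁰ − z*‖² / (3k)`. -/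
theorem tos_best_sublinear_gap_bound
    {d : ℕ} (hd : 1 ≤ d)
    (f g h : EuclideanSpace ℝ (Fin d) → ℝ)
    (hgrad : EuclideanSpace ℝ (Fin d) → EuclideanSpace ℝ (Fin d))
    (L_h : ℝ) (hLh : 0 < L_h)
    (hf : ConvexOn ℝ Set.univ f) (hg : ConvexOn ℝ Set.univ g)
    (hh : ConvexOn ℝ Set.univ h)
    (hdiff : ∀ x, HasGradientAt h (hgrad x) x)
    (hlip : ∀ x y, ‖hgrad x - hgrad y‖ ≤ L_h * ‖x - y‖)
    (α lam : ℝ) (hlam : lam = 1 / 2) (hα : α = 3 / (2 * L_h))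
    -- TOS trajectory
    (z xB y xA pg pf : ℕ → EuclideanSpace ℝ (Fin d))
    (hsubg : ∀ k w, g (xB k) + ⟪pg k, w - xB k⟫ ≤ g w)
    (hsubf : ∀ k w, f (xA k) + ⟪pf k, w - xA k⟫ ≤ f w)
    (hxB : ∀ k, xB k = z k - α • pg k)
    (hy : ∀ k, y k = (2 : ℝ) • xB k - z k - α • hgrad (xB k))
    (hxA : ∀ k, xA k = y k - α • pf k)
    (hz : ∀ k, z (k + 1) = z k + lam • (xA k - xB k))
    -- TOS fixed point
    (zs xs ys pgs pfs : EuclideanSpace ℝ (Fin d))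
    (hsubgs : ∀ w, g xs + ⟪pgs, w - xs⟫ ≤ g w)
    (hsubfs : ∀ w, f xs + ⟪pfs, w - xs⟫ ≤ f w)
    (hxs : xs = zs - α • pgs)
    (hys : ys = (2 : ℝ) • xs - zs - α • hgrad xs)
    (hxAs : xs = ys - α • pfs)
    (k : ℕ) (hk : 1 ≤ k) :
    ∃ i < k, ‖xB i - xA i‖ ^ 2 ≤ 8 * ‖z 0 - zs‖ ^ 2 / (3 * k) :=
  tos_best_sublinear_gap_bound_general f g h hgrad L_h hLh hh hdiff hlip α lam hlam hα z xB y xA pg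
    pf hsubg hsubf hxB hy hxA hz zs xs ys pgs pfs hsubgs hsubfs hxs hys hxAs k hk
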